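/- arXiv:2106.03365 — 2 statements merged into one kernel-verified Lean document; each statement's English description precedes it below -/
import Mathlib

section
/- Let ψ : D → Z be an (ε/2, δ/2)-locally differentially private randomized mechanism on a measurable domain D, and let z₀ ∈ D be a fixed default input. For K ≥ 2, define the synthetic-update mechanism M on D × {1,…,K} by M(x, a) = (Z_1,…,Z_K), where the components are drawn independently with Z_i ~ ψ(x) if i = a and Z_i ~ ψ(z₀) if i ≠ a. Then M is (ε, δ)-locally differentially private on D × {1,…,K}; that is, for any inputs (x, a) ≠ (x′, a′) and any measurable product set C_1 × ··· × C_K, P(M(x,a) ∈ C_1×···×C_K) ≤ e^ε P(M(x′,a′) ∈ C_1×···×C_K) + δ. -/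
open MeasureTheory ProbabilityTheory Real
open scoped ENNReal

/-- Composition core: if `u ≤ E v + d`, `u' ≤ E v' + d`, with everything on the
left bounded by `1`, then `u (u' R) ≤ E E (v (v' R)) + (d + d)`. -/
lemma synthetic_update_key (E d u u' v v' R : ℝ≥0∞)
    (hu'1 : u' ≤ 1) (hR : R ≤ 1)
    (h1 : u ≤ E * v + d) (h2 : u' ≤ E * v' + d) (hu1 : u ≤ 1) :
    u * (u' * R) ≤ E * E * (v * (v' * R)) + (d + d) := by
  have hmin : u ≤ min 1 (E * v) + d := by
    rcases le_total 1 (E * v) with h | h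
    · simpa [min_eq_left h] using le_trans hu1 le_self_add
    · simpa [min_eq_right h] using h1
  have hu'R : u' * R ≤ 1 := by
    calc u' * R ≤ 1 * 1 := mul_le_mul' hu'1 hR
    _ = 1 := one_mul 1
  calc u * (u' * R)
      ≤ (min 1 (E * v) + d) * (u' * R) := mul_le_mul_left hmin _
    _ = min 1 (E * v) * (u' * R) + d * (u' * R) := add_mul _ _ _
    _ ≤ min 1 (E * v) * ((E * v' + d) * R) + d * 1 :=
        add_le_add (mul_le_mul' le_rfl (mul_le_mul_left h2 _))
          (mul_le_mul' le_rfl hu'R)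
    _ = min 1 (E * v) * (E * v' * R) + min 1 (E * v) * (d * R) + d := by ring
    _ ≤ E * v * (E * v' * R) + 1 * (d * 1) + d :=
        add_le_add (add_le_add (mul_le_mul_left (min_le_right _ _) _)
          (mul_le_mul' (min_le_left _ _) (mul_le_mul' le_rfl hR))) le_rfl
    _ = E * E * (v * (v' * R)) + (d + d) := by ring

/-- the synthetic-update mechanism built from an `(ε/2, δ/2)`-LDP
mechanism `ψ` (genuine update `ψ(x)` for the pulled arm `a`, synthetic updates
`ψ(z₀)` for all other arms, all components independent) is `(ε, δ)`-LDP.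
Since the components are independent, the probability that the output lies in a
measurable product set `C₁ × ⋯ × C_K` is the product `∏ i, ψ(input_i)(C_i)`. -/
theorem synthetic_update_ldp
    (D Z : Type) [MeasurableSpace D] [MeasurableSpace Z]
    (ε δ : ℝ) (hε : 0 < ε) (hδ : 0 < δ) (hδ1 : δ < 1)
    (ψ : ProbabilityTheory.Kernel D Z) [IsMarkovKernel ψ]
    (hψ : ∀ (x x' : D) (C : Set Z), MeasurableSet C →
      ψ x C ≤ ENNReal.ofReal (Real.exp (ε / 2)) * ψ x' C + ENNReal.ofReal (δ / 2))
    (z₀ : D) (K : ℕ) (hK : 2 ≤ K)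
    (x x' : D) (a a' : Fin K) (hne : (x, a) ≠ (x', a'))
    (C : Fin K → Set Z) (hC : ∀ i, MeasurableSet (C i)) :
    ∏ i : Fin K, ψ (if i = a then x else z₀) (C i)
      ≤ ENNReal.ofReal (Real.exp ε) * ∏ i : Fin K, ψ (if i = a' then x' else z₀) (C i)
        + ENNReal.ofReal δ := by
  set E : ℝ≥0∞ := ENNReal.ofReal (Real.exp (ε / 2)) with hE
  set d : ℝ≥0∞ := ENNReal.ofReal (δ / 2) with hd
  set f : Fin K → ℝ≥0∞ := fun i => ψ (if i = a then x else z₀) (C i) with hf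
  set g : Fin K → ℝ≥0∞ := fun i => ψ (if i = a' then x' else z₀) (C i) with hg
  have hEE : ENNReal.ofReal (Real.exp ε) = E * E := by
    rw [hE, ← ENNReal.ofReal_mul (Real.exp_nonneg _), ← Real.exp_add]
    norm_num
  have hdd : ENNReal.ofReal δ = d + d := by
    rw [hd, ← ENNReal.ofReal_add (by linarith) (by linarith)]
    norm_num
  have hf1 : ∀ i, f i ≤ 1 := fun i => prob_le_one
  have hg1 : ∀ i, g i ≤ 1 := fun i => prob_le_one
  have hfg : ∀ i, i ≠ a → i ≠ a' → f i = g i := by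
    intro i hia hia'
    simp [hf, hg, hia, hia']
  have hfa : f a ≤ E * g a + d := hψ _ _ _ (hC a)
  have hfa' : f a' ≤ E * g a' + d := hψ _ _ _ (hC a')
  rw [hEE, hdd]
  rcases eq_or_ne a a' with rfl | haa'
  · -- only coordinate `a` differs
    have hmem : a ∈ (Finset.univ : Finset (Fin K)) := Finset.mem_univ a
    rw [← Finset.mul_prod_erase _ f hmem, ← Finset.mul_prod_erase _ g hmem]
    have hrest : ∏ i ∈ Finset.univ.erase a, f i = ∏ i ∈ Finset.univ.erase a, g i := by
      refine Finset.prod_congr rfl fun i hi => ?_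
      exact hfg i (Finset.ne_of_mem_erase hi) (Finset.ne_of_mem_erase hi)
    have hR1 : ∏ i ∈ Finset.univ.erase a, g i ≤ 1 := by
      calc ∏ i ∈ Finset.univ.erase a, g i ≤ ∏ _i ∈ Finset.univ.erase a, (1 : ℝ≥0∞) :=
            Finset.prod_le_prod' fun i _ => hg1 i
        _ = 1 := Finset.prod_const_one
    rw [hrest]
    have hE1 : (1 : ℝ≥0∞) ≤ E := by
      rw [hE]
      exact ENNReal.one_le_ofReal.mpr (Real.one_le_exp (by linarith))
    calc f a * ∏ i ∈ Finset.univ.erase a, g i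
        ≤ (E * g a + d) * ∏ i ∈ Finset.univ.erase a, g i := mul_le_mul_left hfa _
      _ = E * g a * ∏ i ∈ Finset.univ.erase a, g i
            + d * ∏ i ∈ Finset.univ.erase a, g i := add_mul _ _ _
      _ ≤ E * (E * g a * ∏ i ∈ Finset.univ.erase a, g i) + d * 1 :=
          add_le_add (le_mul_of_one_le_left zero_le hE1)
            (mul_le_mul' le_rfl hR1)
      _ ≤ E * E * (g a * ∏ i ∈ Finset.univ.erase a, g i) + (d + d) := by
          rw [mul_one]
          exact add_le_add (le_of_eq (by ring)) le_self_add
  · -- coordinates `a` and `a'` both differ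
    have hmem : a ∈ (Finset.univ : Finset (Fin K)) := Finset.mem_univ a
    have hmem' : a' ∈ Finset.univ.erase a := Finset.mem_erase.mpr ⟨(Ne.symm haa'), Finset.mem_univ a'⟩
    set s : Finset (Fin K) := (Finset.univ.erase a).erase a' with hs
    have hsplit : ∀ h : Fin K → ℝ≥0∞, ∏ i, h i = h a * (h a' * ∏ i ∈ s, h i) := by
      intro h
      rw [← Finset.mul_prod_erase _ h hmem, ← Finset.mul_prod_erase _ h hmem']
    have hrest : ∏ i ∈ s, f i = ∏ i ∈ s, g i := by
      refine Finset.prod_congr rfl fun i hi => ?_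
      have hi' := Finset.mem_erase.mp hi
      exact hfg i (Finset.ne_of_mem_erase hi'.2) hi'.1
    have hR1 : ∏ i ∈ s, g i ≤ 1 := by
      calc ∏ i ∈ s, g i ≤ ∏ _i ∈ s, (1 : ℝ≥0∞) := Finset.prod_le_prod' fun i _ => hg1 i
        _ = 1 := Finset.prod_const_one
    rw [hsplit f, hsplit g, hrest]
    exact synthetic_update_key E d (f a) (f a') (g a) (g a') _ (hf1 a') hR1 hfa hfa' (hf1 a)
end

section
/- Let ψ : D → Z be an (ε/2)-locally differentially private randomized mechanism on a measurable domain D, and let z₀ ∈ D be a fixed default input. For K ≥ 2, define the synthetic-update mechanism M on D × {1,…,K} by M(x, a) = (Z_1,…,Z_K), where the components are drawn independently with Z_i ~ ψ(x) if i = a and Z_i ~ ψ(z₀) if i ≠ a. Then M is ε-locally differentially private on D × {1,…,K}. -/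
open MeasureTheory ProbabilityTheory Real
open scoped ENNReal

/-- the synthetic-update mechanism built from an `(ε/2)`-LDP
mechanism `ψ` (genuine update `ψ(x)` for the pulled arm `a`, synthetic updates
`ψ(z₀)` for all other arms, all components independent) is `ε`-LDP.
Since the components are independent, the probability that the output lies in a
measurable product set `C₁ × ⋯ × C_K` is the product `∏ i, ψ(input_i)(C_i)`. -/
theorem synthetic_update_pure_ldp
    (D Z : Type) [MeasurableSpace D] [MeasurableSpace Z]
    (ε : ℝ) (hε : 0 < ε)
    (ψ : ProbabilityTheory.Kernel D Z) [IsMarkovKernel ψ]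
    (hψ : ∀ (x x' : D) (C : Set Z), MeasurableSet C →
      ψ x C ≤ ENNReal.ofReal (Real.exp (ε / 2)) * ψ x' C)
    (z₀ : D) (K : ℕ) (hK : 2 ≤ K)
    (x x' : D) (a a' : Fin K)
    (C : Fin K → Set Z) (hC : ∀ i, MeasurableSet (C i)) :
    ∏ i : Fin K, ψ (if i = a then x else z₀) (C i)
      ≤ ENNReal.ofReal (Real.exp ε) * ∏ i : Fin K, ψ (if i = a' then x' else z₀) (C i) := by
  set E : ℝ≥0∞ := ENNReal.ofReal (Real.exp (ε / 2)) with hE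
  have hE1 : 1 ≤ E := by
    rw [hE, ← ENNReal.ofReal_one]
    exact ENNReal.ofReal_le_ofReal (Real.one_le_exp (by positivity))
  set c : Fin K → ℝ≥0∞ := fun i => if i = a ∨ i = a' then E else 1 with hc
  have hpt : ∀ i : Fin K,
      ψ (if i = a then x else z₀) (C i) ≤ c i * ψ (if i = a' then x' else z₀) (C i) := by
    intro i
    rcases eq_or_ne i a with rfl | hia
    · simp only [hc, if_pos rfl, true_or]
      simp only [if_true]
      split
      · exact hψ _ _ _ (hC i)
      · exact hψ _ _ _ (hC i)
    · rcases eq_or_ne i a' with rfl | hia'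
      · rw [if_neg hia, if_pos rfl]
        simpa [hc] using hψ z₀ x' (C i) (hC i)
      · rw [if_neg hia, if_neg hia']
        simp [hc, hia, hia']
  calc ∏ i : Fin K, ψ (if i = a then x else z₀) (C i)
      ≤ ∏ i : Fin K, c i * ψ (if i = a' then x' else z₀) (C i) :=
        Finset.prod_le_prod' fun i _ => hpt i
    _ = (∏ i : Fin K, c i) * ∏ i : Fin K, ψ (if i = a' then x' else z₀) (C i) :=
        Finset.prod_mul_distrib
    _ ≤ ENNReal.ofReal (Real.exp ε) * ∏ i : Fin K, ψ (if i = a' then x' else z₀) (C i) := by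
        gcongr
        have : (∏ i : Fin K, c i) = ∏ i ∈ ({a, a'} : Finset (Fin K)), E := by
          rw [← Finset.prod_filter]
          congr 1
          ext i
          simp [hc]
        rw [this, Finset.prod_const]
        have hcard : ({a, a'} : Finset (Fin K)).card ≤ 2 :=
          (Finset.card_insert_le _ _).trans (by simp)
        calc E ^ ({a, a'} : Finset (Fin K)).card ≤ E ^ 2 := pow_le_pow_right' hE1 hcard
          _ = ENNReal.ofReal (Real.exp ε) := by
            rw [hE, sq, ← ENNReal.ofReal_mul (by positivity), ← Real.exp_add]
            norm_num
end
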